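/- Let k ≥ 2 and let s, H be integers with 0 < s < H. The Czech hat game on the directed cycle on ZMod k with constant guessness g ≡ s and constant hatness h ≡ H is winnable if and only if H ≤ 2·s. (Equivalently, the hat s-guessing number of every directed cycle equals 2s.) -/
import Mathlib



private def reachSet {H : ℕ} (R : ℕ → Fin H → Finset (Fin H)) : ℕ → Fin H → Finset (Fin H)
  | 0, x => {x}
  | (i+1), x => (reachSet R i x).biUnion (R i)

private lemma reachSet_card {H m : ℕ} (hm : 1 ≤ m) (R : ℕ → Fin H → Finset (Fin H))
    (hR : ∀ i x, m ≤ (R i x).card) : ∀ i, 1 ≤ i → ∀ x, m ≤ (reachSet R i x).card := by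
  intro i
  induction i with
  | zero => omega
  | succ n ih =>
    intro _ x
    rcases Nat.eq_zero_or_pos n with h0 | h1
    · subst h0
      simpa [reachSet, Finset.singleton_biUnion] using hR 0 x
    · have hne : (reachSet R n x).Nonempty :=
        Finset.card_pos.mp (lt_of_lt_of_le hm (ih h1 x))
      obtain ⟨y, hy⟩ := hne
      calc m ≤ (R n y).card := hR n y
        _ ≤ ((reachSet R n x).biUnion (R n)).card :=
            Finset.card_le_card (Finset.subset_biUnion_of_mem _ hy)

private lemma reachSet_walk {H : ℕ} (R : ℕ → Fin H → Finset (Fin H)) :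
    ∀ (i : ℕ) (x z : Fin H), z ∈ reachSet R i x →
      ∃ w : ℕ → Fin H, w 0 = x ∧ w i = z ∧ ∀ j < i, w (j+1) ∈ R j (w j) := by
  intro i
  induction i with
  | zero =>
    intro x z hz
    simp only [reachSet, Finset.mem_singleton] at hz
    exact ⟨fun _ => x, rfl, hz.symm ▸ rfl, by omega⟩
  | succ n ih =>
    intro x z hz
    simp only [reachSet, Finset.mem_biUnion] at hz
    obtain ⟨y, hy, hzy⟩ := hz
    obtain ⟨w, hw0, hwn, hws⟩ := ih x y hy
    refine ⟨fun j => if j ≤ n then w j else z, by simp [hw0], by simp, ?_⟩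
    intro j hj
    rcases Nat.lt_or_ge j n with h | h
    · simp only [if_pos (by omega : j + 1 ≤ n), if_pos (by omega : j ≤ n)]
      exact hws j h
    · have hjn : j = n := by omega
      simp only [if_neg (by omega : ¬ (j + 1 ≤ n)), if_pos (by omega : j ≤ n)]
      rw [hjn, hwn]
      exact hzy

private lemma exists_cycle_walk {H m : ℕ} (hm : H < 2 * m) (hH : 0 < H) (n : ℕ) (hn : 2 ≤ n)
    (R : ℕ → Fin H → Finset (Fin H)) (hR : ∀ i x, m ≤ (R i x).card) :
    ∃ w : ℕ → Fin H, w n = w 0 ∧ ∀ j < n, w (j+1) ∈ R j (w j) := by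
  have hm1 : 1 ≤ m := by omega
  set P : Finset (Fin H × Fin H) :=
    Finset.univ.biUnion (fun x => (reachSet R (n-1) x).image (fun z => (x, z))) with hP
  set Q : Finset (Fin H × Fin H) :=
    Finset.univ.biUnion (fun z => (R (n-1) z).image (fun x => (x, z))) with hQ
  have hPcard : H * m ≤ P.card := by
    rw [hP, Finset.card_biUnion]
    · calc H * m = ∑ _x : Fin H, m := by simp [Finset.sum_const, mul_comm]
        _ ≤ ∑ x : Fin H, ((reachSet R (n-1) x).image (fun z => (x, z))).card := by
            apply Finset.sum_le_sum
            intro x _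
            rw [Finset.card_image_of_injective _ (fun a b h => by
              simpa using congrArg Prod.snd h)]
            exact reachSet_card hm1 R hR (n-1) (by omega) x
    · intro a _ b _ hab
      simp only [Finset.disjoint_left]
      intro p hp hq
      simp only [Finset.mem_image] at hp hq
      obtain ⟨_, _, rfl⟩ := hp
      obtain ⟨_, _, h2⟩ := hq
      exact hab (congrArg Prod.fst h2).symm
  have hQcard : H * m ≤ Q.card := by
    rw [hQ, Finset.card_biUnion]
    · calc H * m = ∑ _x : Fin H, m := by simp [Finset.sum_const, mul_comm]
        _ ≤ ∑ z : Fin H, ((R (n-1) z).image (fun x => (x, z))).card := by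
            apply Finset.sum_le_sum
            intro z _
            rw [Finset.card_image_of_injective _ (fun a b h => by
              simpa using congrArg Prod.fst h)]
            exact hR (n-1) z
    · intro a _ b _ hab
      simp only [Finset.disjoint_left]
      intro p hp hq
      simp only [Finset.mem_image] at hp hq
      obtain ⟨_, _, rfl⟩ := hp
      obtain ⟨_, _, h2⟩ := hq
      exact hab (congrArg Prod.snd h2).symm
  have hinter : (P ∩ Q).Nonempty := by
    rw [← Finset.card_pos]
    have hU : (P ∪ Q).card ≤ H * H := by
      calc (P ∪ Q).card ≤ (Finset.univ : Finset (Fin H × Fin H)).card :=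
            Finset.card_le_card (Finset.subset_univ _)
        _ = H * H := by simp
    have h1 := Finset.card_union_add_card_inter P Q
    have h2 : H * H < H * m + H * m := by nlinarith
    omega
  obtain ⟨p, hp⟩ := hinter
  obtain ⟨x, z⟩ := p
  rw [Finset.mem_inter] at hp
  obtain ⟨hpP, hpQ⟩ := hp
  have hreach : z ∈ reachSet R (n-1) x := by
    rw [hP] at hpP
    simp only [Finset.mem_biUnion, Finset.mem_image] at hpP
    obtain ⟨a, _, b, hb, heq⟩ := hpP
    cases heq
    exact hb
  have hback : x ∈ R (n-1) z := by
    rw [hQ] at hpQ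
    simp only [Finset.mem_biUnion, Finset.mem_image] at hpQ
    obtain ⟨a, _, b, hb, heq⟩ := hpQ
    cases heq
    exact hb
  obtain ⟨w, hw0, hwn, hws⟩ := reachSet_walk R (n-1) x z hreach
  refine ⟨fun j => if j ≤ n - 1 then w j else x, ?_, ?_⟩
  · simp only [if_neg (by omega : ¬ (n ≤ n - 1)), if_pos (by omega : 0 ≤ n - 1), hw0]
  · intro j hj
    rcases Nat.lt_or_ge j (n-1) with h | h
    · simp only [if_pos (by omega : j + 1 ≤ n - 1), if_pos (by omega : j ≤ n - 1)]
      exact hws j h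
    · have hjn : j = n - 1 := by omega
      subst hjn
      simp only [if_neg (by omega : ¬ (n - 1 + 1 ≤ n - 1)), if_pos (le_refl (n-1)), hwn]
      exact hback
/-- A Czech hat game on the digraph with adjacency `D` (sage `v` sees sage `u`
iff `D v u`), guessness `g`, and hatness `h`, is winnable: there is a strategy
assigning to each sage `v` a set of `g v` guesses, depending only on the hats
she sees, such that for every coloring some sage guesses her own hat color. -/
def HatGame.Winnable {V : Type*} (D : V → V → Prop) (g h : V → ℕ) : Prop :=
  ∃ F : ∀ v : V, (∀ u : V, Fin (h u)) → Finset (Fin (h v)),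
    (∀ (v : V) (c c' : ∀ u : V, Fin (h u)),
        (∀ u : V, D v u → c u = c' u) → F v c = F v c') ∧
    (∀ (v : V) (c : ∀ u : V, Fin (h u)), (F v c).card = g v) ∧
    (∀ c : ∀ u : V, Fin (h u), ∃ v : V, c v ∈ F v c)


private lemma forward_dir (k : ℕ) (hk : 2 ≤ k)
    (s H : ℕ) (hs : 0 < s) (hH : s < H)
    (hw : HatGame.Winnable (fun i j : ZMod k => j = i + 1)
        (fun _ => s) (fun _ => H)) : H ≤ 2 * s := by
  by_contra hle
  push_neg at hle
  obtain ⟨F, hdep, hcard, hwin⟩ := hw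
  haveI : NeZero k := ⟨by omega⟩
  set m := H - s with hm
  have hm2 : H < 2 * m := by omega
  -- single-neighbor dependence
  have key : ∀ (v : ZMod k) (c : ∀ _ : ZMod k, Fin H), F v c = F v (fun _ => c (v+1)) := by
    intro v c
    apply hdep
    intro u hu
    simp only [hu]
  set B : ZMod k → Fin H → Finset (Fin H) := fun v y => (F v (fun _ => y))ᶜ with hB
  have hBcard : ∀ v y, m ≤ (B v y).card := by
    intro v y
    rw [hB]
    simp only [Finset.card_compl, Fintype.card_fin]
    rw [hcard v (fun _ => y)]
  set R : ℕ → Fin H → Finset (Fin H) := fun i => B ((k - 1 - i : ℕ) : ZMod k) with hR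
  obtain ⟨w, hw0, hws⟩ := exists_cycle_walk hm2 (by omega) k hk R (fun i x => hBcard _ x)
  set c : ∀ _ : ZMod k, Fin H := fun v => w (k - v.val) with hc
  have hbad : ∀ v : ZMod k, c v ∉ F v c := by
    intro v
    have hvlt : v.val < k := ZMod.val_lt v
    have step := hws (k - 1 - v.val) (by omega)
    have hidx : k - 1 - (k - 1 - v.val) = v.val := by omega
    have hvv : ((v.val : ℕ) : ZMod k) = v := ZMod.natCast_rightInverse v
    have hRB : R (k - 1 - v.val) = B v := by simp only [hR]; rw [hidx, hvv]
    have hcv : c v = w (k - 1 - v.val + 1) := by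
      show w (k - v.val) = w (k - 1 - v.val + 1)
      congr 1
      omega
    have hval1 : (v + 1).val = (v.val + 1) % k := by
      have h1 : (1 : ZMod k).val = 1 := ZMod.val_one_eq_one_mod k ▸ Nat.mod_eq_of_lt (by omega)
      rw [ZMod.val_add, h1]
    have hnext : w (k - 1 - v.val) = c (v + 1) := by
      show w (k - 1 - v.val) = w (k - (v + 1).val)
      rcases Nat.lt_or_ge (v.val + 1) k with h | h
      · congr 1
        rw [hval1, Nat.mod_eq_of_lt h]
        omega
      · have hz : (v + 1).val = 0 := by
          have hvk : v.val + 1 = k := by omega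
          rw [hval1, hvk, Nat.mod_self]
        rw [hz]
        have he : k - 1 - v.val = 0 := by omega
        rw [he, Nat.sub_zero, hw0]
    rw [key v c, ← hnext]
    have : c v ∈ B v (w (k - 1 - v.val)) := by
      rw [← hRB, hcv]
      exact step
    rw [hB] at this
    simpa using Finset.mem_compl.mp this
  obtain ⟨v, hv⟩ := hwin c
  exact hbad v hv

private lemma backward_dir (k : ℕ) (hk : 2 ≤ k)
    (s H : ℕ) (hs : 0 < s) (hH : s < H) (h2 : H ≤ 2 * s) :
    HatGame.Winnable (fun i j : ZMod k => j = i + 1)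
        (fun _ => s) (fun _ => H) := by
  haveI : NeZero k := ⟨by omega⟩
  set m := H - s with hm
  have hms : m ≤ s := by omega
  have hm1 : 1 ≤ m := by omega
  have hsH : s ≤ H := le_of_lt hH
  -- guess set A : all values < s
  set GA : Finset (Fin H) := Finset.univ.map (Fin.castLEEmb hsH) with hGA
  have hGAcard : GA.card = s := by simp [hGA]
  have hGAmem : ∀ x : Fin H, x.val < s → x ∈ GA := by
    intro x hx
    rw [hGA, Finset.mem_map]
    exact ⟨⟨x.val, hx⟩, Finset.mem_univ _, rfl⟩
  -- guess set B : all values ≥ s, padded with values < s - m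
  have hfB : ∀ i : Fin s, (if i.val < s - m then i.val else i.val + m) < H := by
    intro i
    have := i.isLt
    split <;> omega
  set fB : Fin s → Fin H := fun i => ⟨if i.val < s - m then i.val else i.val + m, hfB i⟩ with hfBdef
  have hfBinj : Function.Injective fB := by
    intro i j hij
    have hval := congrArg Fin.val hij
    simp only [hfBdef] at hval
    have hi := i.isLt
    have hj := j.isLt
    apply Fin.ext
    split_ifs at hval <;> omega
  set GB : Finset (Fin H) := Finset.univ.map ⟨fB, hfBinj⟩ with hGB
  have hGBcard : GB.card = s := by simp [hGB]
  have hGBmem : ∀ x : Fin H, s ≤ x.val → x ∈ GB := by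
    intro x hx
    have hxlt := x.isLt
    rw [hGB, Finset.mem_map]
    refine ⟨⟨x.val - m, by omega⟩, Finset.mem_univ _, ?_⟩
    apply Fin.ext
    simp only [hfBdef, Function.Embedding.coeFn_mk]
    rw [if_neg (by omega)]
    omega
  -- block function and twist
  set blk : Fin H → ZMod 2 := fun x => if x.val < s then 0 else 1 with hblk
  set eK : ZMod 2 := if Even k then 1 else 0 with heK
  set τ : ZMod k → ZMod 2 := fun v => if v = 0 then eK else 0 with hτ
  refine ⟨fun v c => if blk (c (v + 1)) + τ v = 0 then GA else GB, ?_, ?_, ?_⟩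
  · intro v c c' hagree
    have hcc : c (v + 1) = c' (v + 1) := hagree (v + 1) rfl
    show (if blk (c (v + 1)) + τ v = 0 then GA else GB)
        = (if blk (c' (v + 1)) + τ v = 0 then GA else GB)
    rw [hcc]
  · intro v c
    show (if blk (c (v + 1)) + τ v = 0 then GA else GB).card = s
    split
    · exact hGAcard
    · exact hGBcard
  · intro c
    by_contra hno
    push_neg at hno
    have hrel : ∀ v : ZMod k, blk (c v) = blk (c (v + 1)) + τ v + 1 := by
      intro v
      have hv : c v ∉ (if blk (c (v + 1)) + τ v = 0 then GA else GB) := hno v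
      by_cases hb : blk (c (v + 1)) + τ v = 0
      · rw [if_pos hb] at hv
        have : ¬ (c v).val < s := fun hlt => hv (hGAmem _ hlt)
        rw [hblk]
        simp only [if_neg this]
        rw [hb, zero_add]
      · rw [if_neg hb] at hv
        have : (c v).val < s := by
          by_contra hge
          exact hv (hGBmem _ (by omega))
        have hb1 : blk (c (v + 1)) + τ v = 1 := by
          revert hb; generalize blk (c (v + 1)) + τ v = x; revert x; decide
        rw [hblk]
        simp only [if_pos this]
        rw [hb1]
        decide
    -- sum over all vertices
    have hsum : ∑ v : ZMod k, blk (c v)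
        = ∑ v : ZMod k, (blk (c (v + 1)) + τ v + 1) :=
      Finset.sum_congr rfl (fun v _ => hrel v)
    have hshift : ∑ v : ZMod k, blk (c (v + 1)) = ∑ v : ZMod k, blk (c v) :=
      Fintype.sum_equiv (Equiv.addRight (1 : ZMod k)) _ _ (fun v => rfl)
    have hτsum : ∑ v : ZMod k, τ v = eK := by
      rw [hτ]
      rw [Finset.sum_ite_eq' Finset.univ (0 : ZMod k) (fun _ => eK)]
      simp
    have hcount : ∑ _v : ZMod k, (1 : ZMod 2) = (k : ZMod 2) := by
      simp [Finset.sum_const, ZMod.card]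
    rw [Finset.sum_add_distrib, Finset.sum_add_distrib, hshift, hτsum, hcount] at hsum
    have hfin : eK + (k : ZMod 2) = 0 := by
      have := hsum
      abel_nf at this ⊢
      linear_combination (norm := abel_nf) -this
    rcases Nat.even_or_odd k with he | ho
    · have hk0 : (k : ZMod 2) = 0 := by
        obtain ⟨t, ht⟩ := he
        have hmod : k % 2 = 0 := by omega
        rw [← ZMod.natCast_mod, hmod, Nat.cast_zero]
      rw [heK, if_pos he, hk0, add_zero] at hfin
      exact one_ne_zero hfin
    · have hk1 : (k : ZMod 2) = 1 := by
        obtain ⟨t, ht⟩ := ho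
        have hmod : k % 2 = 1 := by omega
        rw [← ZMod.natCast_mod, hmod, Nat.cast_one]
      rw [heK, if_neg (Nat.not_even_iff_odd.mpr ho), hk1, zero_add] at hfin
      exact one_ne_zero hfin
/-- The Polish game on a directed cycle with guessness `s` and hatness `H`
is winnable iff `H ≤ 2 s`; i.e. the hat `s`-guessing number of a directed
cycle is `2 s`. -/
theorem polish_directed_cycle_winnable_iff (k : ℕ) (hk : 2 ≤ k)
    (s H : ℕ) (hs : 0 < s) (hH : s < H) :
    HatGame.Winnable (fun i j : ZMod k => j = i + 1)
        (fun _ => s) (fun _ => H) ↔ H ≤ 2 * s := by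
  exact ⟨forward_dir k hk s H hs hH, backward_dir k hk s H hs hH⟩
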